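/- For every integer n ≥ 2 and every integer k ≥ ⌈n/2⌉ + 1, the number of non-equivalent distinguishing colorings of the path P_n using exactly k colors equals k!·S(n,k)/2, i.e., φ_k(P_n) = k!·S(n,k)/2. -/

import Mathlib

open SimpleGraph

def IsDistinguishing {V : Type*} {k : ℕ} (G : SimpleGraph V) (c : V → Fin k) : Prop :=
  ∀ α : G ≃g G, (∀ v, c (α v) = c v) → ∀ v, α v = v

noncomputable def Phi {V : Type*} (G : SimpleGraph V) (k : ℕ) : ℕ :=
  Nat.card (Quot (fun c₁ c₂ : {c : V → Fin k // IsDistinguishing G c} =>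
    ∃ α : G ≃g G, ∀ v, c₁.1 v = c₂.1 (α v)))

noncomputable def phi {V : Type*} (G : SimpleGraph V) (k : ℕ) : ℕ :=
  Nat.card (Quot (fun c₁ c₂ : {c : V → Fin k // IsDistinguishing G c ∧ Function.Surjective c} =>
    ∃ α : G ≃g G, ∀ v, c₁.1 v = c₂.1 (α v)))

noncomputable def theta {V : Type*} (G : SimpleGraph V) : ℕ :=
  sInf {t | ∀ k, t ≤ k → ∀ c : V → Fin k, Function.Surjective c → IsDistinguishing G c}

def stirling2 : ℕ → ℕ → ℕ
  | 0, 0 => 1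
  | 0, _ + 1 => 0
  | _ + 1, 0 => 0
  | n + 1, k + 1 => (k + 1) * stirling2 n (k + 1) + stirling2 n k

def IsDCPartition {V : Type*} [DecidableEq V] [Fintype V] (G : SimpleGraph V)
    (P : Finpartition (Finset.univ : Finset V)) : Prop :=
  ∀ α : G ≃g G, (∀ p ∈ P.parts, p.image ⇑α = p) → ∀ v, α v = v

def IsDPartition {V : Type*} [DecidableEq V] [Fintype V] (G : SimpleGraph V)
    (P : Finpartition (Finset.univ : Finset V)) : Prop :=
  ∀ α : G ≃g G, P.parts.image (fun p => p.image ⇑α) = P.parts → ∀ v, α v = v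

def PartEquiv {V : Type*} [DecidableEq V] [Fintype V] (G : SimpleGraph V)
    (P₁ P₂ : Finpartition (Finset.univ : Finset V)) : Prop :=
  ∃ α : G ≃g G, P₁.parts.image (fun p => p.image ⇑α) = P₂.parts

noncomputable def psi {V : Type*} [DecidableEq V] [Fintype V] (G : SimpleGraph V) (k : ℕ) : ℕ :=
  Nat.card (Quot (fun P₁ P₂ : {P : Finpartition (Finset.univ : Finset V) //
      IsDCPartition G P ∧ P.parts.card = k} => PartEquiv G P₁.1 P₂.1))

noncomputable def PsiAtMost {V : Type*} [DecidableEq V] [Fintype V] (G : SimpleGraph V) (k : ℕ) : ℕ :=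
  Nat.card (Quot (fun P₁ P₂ : {P : Finpartition (Finset.univ : Finset V) //
      IsDCPartition G P ∧ P.parts.card ≤ k} => PartEquiv G P₁.1 P₂.1))

noncomputable def PiAtMost {V : Type*} [DecidableEq V] [Fintype V] (G : SimpleGraph V) (k : ℕ) : ℕ :=
  Nat.card (Quot (fun P₁ P₂ : {P : Finpartition (Finset.univ : Finset V) //
      P.parts.card ≤ k} => PartEquiv G P₁.1 P₂.1))

noncomputable def XiAtMost {V : Type*} [DecidableEq V] [Fintype V] (G : SimpleGraph V) (k : ℕ) : ℕ :=
  Nat.card (Quot (fun P₁ P₂ : {P : Finpartition (Finset.univ : Finset V) //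
      IsDPartition G P ∧ P.parts.card ≤ k} => PartEquiv G P₁.1 P₂.1))

def kneserGraph2 (n : ℕ) : SimpleGraph {s : Finset (Fin n) // s.card = 2} where
  Adj a b := Disjoint a.1 b.1
  symm := ⟨fun a b h => h.symm⟩
  loopless := by
    refine ⟨?_⟩
    rintro ⟨s, hs⟩ h
    simp only [disjoint_self, Finset.bot_eq_empty] at h
    simp [h] at hs

def lexProd {V W : Type*} (X : SimpleGraph V) (Y : SimpleGraph W) : SimpleGraph (V × W) where
  Adj a b := X.Adj a.1 b.1 ∨ (a.1 = b.1 ∧ Y.Adj a.2 b.2)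
  symm := by
    refine ⟨?_⟩
    rintro ⟨x, y⟩ ⟨x', y'⟩ (h | ⟨h, h'⟩)
    · exact Or.inl h.symm
    · exact Or.inr ⟨h.symm, h'.symm⟩
  loopless := by
    refine ⟨?_⟩
    rintro ⟨x, y⟩ (h | ⟨-, h⟩)
    · exact X.loopless.irrefl x h
    · exact Y.loopless.irrefl y h

def IsNaturalAut {V W : Type*} (X : SimpleGraph V) (Y : SimpleGraph W)
    (μ : lexProd X Y ≃g lexProd X Y) : Prop :=
  ∀ x : V, ∃ x' : V, (fun p => μ p) '' ({x} ×ˢ (Set.univ : Set W)) = {x'} ×ˢ (Set.univ : Set W)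

noncomputable def distNumber {V : Type*} (G : SimpleGraph V) : ℕ :=
  sInf {k | ∃ c : V → Fin k, IsDistinguishing G c}

/-!
Every automorphism of `P_n` is the identity or the reversal `i ↦ n - 1 - i`. A colouring fixed by
the reversal takes all its values on the first `⌈n/2⌉` vertices, so for `k > ⌈n/2⌉` every
surjective colouring is distinguishing. The automorphism group acts freely on distinguishing
colourings, so every equivalence class has exactly `|Aut P_n| = 2` elements, and there are
`k! S(n,k)` surjections onto `k` colours.
-/

open Function

section Distinguishing

variable {V : Type*} {G : SimpleGraph V} {k : ℕ}

theorem IsDistinguishing.comp_iso {c : V → Fin k} (hc : IsDistinguishing G c) (α : G ≃g G) :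
    IsDistinguishing G (c ∘ α) := by
  intro β hβ v
  have := hc (α.symm.trans (β.trans α)) (fun w => by simpa using hβ (α.symm w)) (α v)
  simpa using this

variable (G k)

/-- Automorphisms act on the right, by precomposition, so that the orbits are the classes counted
by `phi`. -/
@[reducible] def distinguishingAction :
    MulAction (G ≃g G)ᵐᵒᵖ {c : V → Fin k // IsDistinguishing G c ∧ Surjective c} where
  smul α c := ⟨c.1 ∘ α.unop, c.2.1.comp_iso α.unop, c.2.2.comp α.unop.surjective⟩
  one_smul _ := rfl
  mul_smul _ _ _ := rfl

theorem card_distinguishing_surjective_eq_card_mul_phi :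
    Nat.card {c : V → Fin k // IsDistinguishing G c ∧ Surjective c} =
      Nat.card (G ≃g G) * phi G k := by
  let _ := distinguishingAction G k
  have hfree : ∀ c : {c : V → Fin k // IsDistinguishing G c ∧ Surjective c},
      MulAction.stabilizer (G ≃g G)ᵐᵒᵖ c = ⊥ := by
    intro c
    ext α
    rw [MulAction.mem_stabilizer_iff, Subgroup.mem_bot]
    refine ⟨fun h => ?_, fun h => h ▸ one_smul _ c⟩
    rw [← MulOpposite.unop_eq_one_iff]
    exact RelIso.ext (c.2.1 α.unop fun v => congrFun (congrArg Subtype.val h) v)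
  have horbit : Quot (fun c₁ c₂ : {c : V → Fin k // IsDistinguishing G c ∧ Surjective c} =>
      ∃ α : G ≃g G, ∀ v, c₁.1 v = c₂.1 (α v)) ≃ MulAction.orbitRel.Quotient (G ≃g G)ᵐᵒᵖ _ :=
    Quot.congr (Equiv.refl _) fun c₁ c₂ => by
      rw [Equiv.refl_apply, Equiv.refl_apply, MulAction.orbitRel_apply, MulAction.mem_orbit_iff,
        MulOpposite.op_surjective.exists]
      simp only [Subtype.ext_iff, funext_iff, eq_comm]
      rfl
  rw [Nat.card_congr (MulAction.selfEquivOrbitsQuotientProd hfree), Nat.card_prod, mul_comm,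
    Nat.card_congr MulOpposite.opEquiv.symm, phi, Nat.card_congr horbit]

end Distinguishing

theorem stirling2_eq_stirlingSecond : stirling2 = Nat.stirlingSecond := by
  funext n k
  induction n generalizing k with
  | zero => cases k <;> rfl
  | succ n ih => cases k <;> simp [stirling2, Nat.stirlingSecond, ih]

theorem Fin.surjective_cons_iff {β : Type*} {n : ℕ} (v : β) (c : Fin n → β) :
    Surjective (Fin.cons v c : Fin (n + 1) → β) ↔ Surjective c ∨ Set.range c = {v}ᶜ := by
  rw [← Set.range_eq_univ, Fin.range_cons, Set.insert_eq, ← Set.compl_subset_iff_union,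
    ← Set.range_eq_univ, Set.compl_subset_comm, Set.subset_singleton_iff_eq, Set.compl_empty_iff,
    compl_eq_comm]
  exact or_congr_right eq_comm

def Equiv.rangeEqEquivSurjective {α β : Type*} (s : Set β) :
    {f : α → β // Set.range f = s} ≃ {g : α → s // Surjective g} where
  toFun f := ⟨fun a => ⟨f.1 a, f.2.subset (Set.mem_range_self a)⟩, fun b => by
    obtain ⟨a, ha⟩ := f.2.symm.subset b.2
    exact ⟨a, Subtype.ext ha⟩⟩
  invFun g := ⟨fun a => g.1 a, by
    rw [Set.range_comp' Subtype.val g.1, g.2.range_eq, Set.image_univ, Subtype.range_coe]⟩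
  left_inv _ := rfl
  right_inv _ := rfl

theorem Nat.card_surjective_congr {α β γ : Type*} (e : β ≃ γ) :
    Nat.card {f : α → β // Surjective f} = Nat.card {f : α → γ // Surjective f} :=
  Nat.card_congr <| (Equiv.arrowCongr (Equiv.refl α) e).subtypeEquiv fun _ =>
    (e.comp_surjective _).symm

theorem Nat.card_surjective_fin_cons {n k : ℕ} (v : Fin (k + 1)) :
    Nat.card {c : Fin n → Fin (k + 1) // Surjective (Fin.cons v c : Fin (n + 1) → Fin (k + 1))} =
      Nat.card {c : Fin n → Fin (k + 1) // Surjective c} +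
        Nat.card {c : Fin n → Fin k // Surjective c} := by
  classical
  have hdisj : Disjoint (fun c : Fin n → Fin (k + 1) => Surjective c)
      (fun c => Set.range c = {v}ᶜ) := by
    refine Pi.disjoint_iff.2 fun c => Prop.disjoint_iff.2 fun ⟨hsurj, hrange⟩ => ?_
    exact (hrange ▸ Set.mem_range.2 (hsurj v) : v ∈ ({v}ᶜ : Set (Fin (k + 1)))) rfl
  rw [Nat.card_congr ((Equiv.subtypeEquivRight fun c => Fin.surjective_cons_iff v c).trans
      (subtypeOrEquiv _ _ hdisj)), Nat.card_sum,
    Nat.card_congr (Equiv.rangeEqEquivSurjective _),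
    Nat.card_surjective_congr (β := ({v}ᶜ : Set (Fin (k + 1)))) (finSuccAboveEquiv v).symm]

theorem Nat.card_surjective_fin (n k : ℕ) :
    Nat.card {c : Fin n → Fin k // Surjective c} = k.factorial * Nat.stirlingSecond n k := by
  induction n generalizing k with
  | zero =>
    cases k with
    | zero => rw [Nat.card_eq_fintype_card]; decide
    | succ k =>
      have : IsEmpty {c : Fin 0 → Fin (k + 1) // Surjective c} :=
        ⟨fun c => (c.2 0).elim fun i _ => i.elim0⟩
      simp [Nat.stirlingSecond]
  | succ n ih =>
    cases k with
    | zero => simp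
    | succ k =>
      have hcons : {c : Fin (n + 1) → Fin (k + 1) // Surjective c} ≃
          Σ v : Fin (k + 1), {c : Fin n → Fin (k + 1) //
            Surjective (Fin.cons v c : Fin (n + 1) → Fin (k + 1))} :=
        ((Fin.consEquiv fun _ => Fin (k + 1)).symm.subtypeEquiv fun c => by simp).trans
          (Equiv.subtypeProdEquivSigmaSubtype fun v c =>
            Surjective (Fin.cons v c : Fin (n + 1) → Fin (k + 1)))
      rw [Nat.card_congr hcons, Nat.card_sigma]
      simp only [Nat.card_surjective_fin_cons, ih, Finset.sum_const, Finset.card_univ,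
        Fintype.card_fin, smul_eq_mul, Nat.stirlingSecond_succ_succ, Nat.factorial_succ]
      ring

namespace SimpleGraph.pathGraph

def revIso (n : ℕ) : pathGraph n ≃g pathGraph n where
  toEquiv := Fin.revPerm
  map_rel_iff' {u v} := by
    simp only [Fin.revPerm_apply, pathGraph_adj, Fin.val_rev]
    omega

@[simp]
theorem revIso_apply {n : ℕ} (v : Fin n) : revIso n v = v.rev := rfl

theorem revIso_mul_self (n : ℕ) : revIso n * revIso n = 1 :=
  RelIso.ext Fin.rev_rev

theorem revIso_ne_one {n : ℕ} (hn : 2 ≤ n) : revIso n ≠ 1 := fun h => by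
  have := congrArg Fin.val (RelIso.ext_iff.1 h ⟨0, by omega⟩)
  simp only [revIso_apply, Fin.val_rev, RelIso.coe_one, id] at this
  omega

theorem val_eq_one_of_adj_zero {n : ℕ} {u : Fin (n + 1)} (h : (pathGraph (n + 1)).Adj u 0) :
    u.val = 1 := by
  rw [pathGraph_adj, Fin.val_zero] at h
  omega

theorem iso_apply_zero_eq_zero_or_last {n : ℕ} (α : pathGraph (n + 1) ≃g pathGraph (n + 1)) :
    α 0 = 0 ∨ α 0 = Fin.last n := by
  by_contra! h
  have hpos : 0 < (α 0).val := Fin.pos_of_ne_zero h.1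
  have hlt : (α 0).val < n := Fin.val_lt_last h.2
  let pred : Fin (n + 1) := ⟨(α 0).val - 1, by omega⟩
  let succ : Fin (n + 1) := ⟨(α 0).val + 1, by omega⟩
  have hpred : (pathGraph (n + 1)).Adj (α.symm pred) 0 := by
    simpa using α.symm.map_rel_iff.2 (show (pathGraph (n + 1)).Adj pred (α 0) by
      rw [pathGraph_adj]; simp only [pred]; omega)
  have hsucc : (pathGraph (n + 1)).Adj (α.symm succ) 0 := by
    simpa using α.symm.map_rel_iff.2 (show (pathGraph (n + 1)).Adj succ (α 0) by
      rw [pathGraph_adj]; exact Or.inr rfl)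
  have := α.symm.injective (Fin.ext ((val_eq_one_of_adj_zero hpred).trans
    (val_eq_one_of_adj_zero hsucc).symm))
  simp only [pred, succ, Fin.mk.injEq] at this
  omega

theorem iso_eq_one_of_apply_zero {n : ℕ} (α : pathGraph (n + 1) ≃g pathGraph (n + 1))
    (h : α 0 = 0) : α = 1 := by
  suffices ∀ m (hm : m < n + 1), (α ⟨m, hm⟩).val = m from
    RelIso.ext fun v => Fin.ext (this v.val v.isLt)
  intro m
  induction m using Nat.strong_induction_on with
  | _ m ih =>
    intro hm
    match m with
    | 0 => exact congrArg Fin.val h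
    | p + 1 =>
      have hadj := α.map_rel_iff.2 (show (pathGraph (n + 1)).Adj ⟨p, by omega⟩ ⟨p + 1, hm⟩ by
        rw [pathGraph_adj]; simp)
      rw [pathGraph_adj, ih p (by omega)] at hadj
      rcases hadj with hadj | hadj
      · exact hadj.symm
      · have hback := ih (p - 1) (by omega) (by omega)
        have := α.injective <| Fin.ext <|
          show (α ⟨p + 1, hm⟩).val = (α ⟨p - 1, by omega⟩).val by omega
        simp only [Fin.mk.injEq] at this
        omega

theorem iso_eq_one_or_eq_revIso {n : ℕ} (α : pathGraph n ≃g pathGraph n) :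
    α = 1 ∨ α = revIso n := by
  cases n with
  | zero => exact Or.inl (RelIso.ext fun v => v.elim0)
  | succ n =>
    rcases iso_apply_zero_eq_zero_or_last α with h | h
    · exact Or.inl (iso_eq_one_of_apply_zero α h)
    · right
      have hrev : revIso (n + 1) * α = 1 :=
        iso_eq_one_of_apply_zero _ (by simp [h])
      rw [eq_inv_of_mul_eq_one_right hrev, inv_eq_of_mul_eq_one_right (revIso_mul_self _)]

theorem card_iso {n : ℕ} (hn : 2 ≤ n) : Nat.card (pathGraph n ≃g pathGraph n) = 2 :=
  Nat.card_eq_two_iff.2 ⟨1, revIso n, (revIso_ne_one hn).symm,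
    Set.eq_univ_of_forall fun α => iso_eq_one_or_eq_revIso α⟩

theorem card_le_of_surjective_of_comp_rev {n k : ℕ} {c : Fin n → Fin k} (hc : Surjective c)
    (hrev : ∀ v, c v.rev = c v) : k ≤ (n + 1) / 2 := by
  have hsurj : Surjective fun j : Fin ((n + 1) / 2) => c (Fin.castLE (by omega) j) := by
    intro x
    obtain ⟨v, rfl⟩ := hc x
    by_cases hv : v.val < (n + 1) / 2
    · exact ⟨⟨v, hv⟩, rfl⟩
    · refine ⟨⟨v.rev, ?_⟩, hrev v⟩
      have := v.isLt
      rw [Fin.val_rev]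
      omega
  simpa using Fintype.card_le_of_surjective _ hsurj

theorem isDistinguishing_of_surjective {n k : ℕ} (hk : (n + 1) / 2 < k) {c : Fin n → Fin k}
    (hc : Surjective c) : IsDistinguishing (pathGraph n) c := by
  intro α hα
  rcases iso_eq_one_or_eq_revIso α with rfl | rfl
  · exact fun _ => rfl
  · exact absurd (card_le_of_surjective_of_comp_rev hc hα) (by omega)

end SimpleGraph.pathGraph

theorem phi_pathGraph_of_ge (n k : ℕ) (hn : 2 ≤ n) (hk : (n + 1) / 2 + 1 ≤ k) :
    phi (pathGraph n) k = k.factorial * stirling2 n k / 2 := by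
  have hcount : Nat.card {c : Fin n → Fin k // IsDistinguishing (pathGraph n) c ∧ Surjective c} =
      k.factorial * stirling2 n k := by
    rw [stirling2_eq_stirlingSecond, ← Nat.card_surjective_fin]
    exact Nat.card_congr <| Equiv.subtypeEquivRight fun c =>
      and_iff_right_of_imp (pathGraph.isDistinguishing_of_surjective (by omega))
  rw [← hcount, card_distinguishing_surjective_eq_card_mul_phi, pathGraph.card_iso hn,
    Nat.mul_div_cancel_left _ two_pos]
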